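/- arXiv:2105.05172 — 2 statements merged into one kernel-verified Lean document; each statement's English description precedes it below -/
import Mathlib

section
/- Let w be a nonoverlapping word of length m and N_w its occurrence count in an i.i.d. string of length n with per-position probability p. For every t >= 1, E(N_w^t) = sum_{s=1}^{min(T,t)} A_{t,s} * C(n - s*m + s, s) * p^s, where A_{t,s} = sum_{r=0}^{s} C(s,r) r^t (-1)^{s-r} is the number of surjections from a t-element set onto an s-element set, and T = max { t' in ℕ : n - t'*m >= 0 }. -/
open MeasureTheory
open scoped Classical

/-- `w` occurs in `z` at position `i` (0-indexed) as a contiguous substring. -/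
def OccursAt {α : Type*} (z w : List α) (i : ℕ) : Prop :=
  i + w.length ≤ z.length ∧ (z.drop i).take w.length = w

/-- A word `w` is nonoverlapping if no string of length `< 2|w|` contains two
occurrences of `w` at distinct positions. -/
def Nonoverlapping {α : Type*} (w : List α) : Prop :=
  ¬ ∃ (z : List α) (i j : ℕ), z.length < 2 * w.length ∧ i ≠ j ∧
    OccursAt z w i ∧ OccursAt z w j

/-- The number of occurrences of the word `w` in the string `z`. -/
noncomputable def countOcc {α : Type*} (w z : List α) : ℕ :=
  ((Finset.range z.length).filter (fun i => OccursAt z w i)).card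

/-- The probability of the word `w` at a fixed position under the i.i.d. law with
marginal `μ`. -/
noncomputable def wordProb {α : Type*} [MeasurableSpace α] (μ : Measure α)
    (w : List α) : ℝ :=
  (w.map fun a => (μ {a}).toReal).prod

/-!
Write `N_w = ∑ᵢ Yᵢ` with `Yᵢ` the indicator of an occurrence of `w` at position `i`. The `Yᵢ` are
idempotent, so expanding `N_w ^ t` and grouping the `t`-tuples of positions by their image `B`
gives `E(N_w ^ t) = ∑_B A_{t,|B|} P(w occurs at every i ∈ B)`: exactly `A_{t,|B|}` tuples, the
surjections onto `B`, have image `B`, and `A_{t,s}` is computed by inclusion–exclusion. As `w` is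
nonoverlapping, this probability vanishes unless the positions of `B` are at least `m` apart; then
the occurrences fix disjoint letters, so it is `p ^ |B|` by independence. Finally, the `s`-sets of
`m`-spaced starting positions in `[0, n - m]` are counted by `C(n - s m + s, s)`.
-/

open Finset

def surjCount (t s : ℕ) : ℕ := #{g : Fin t → Fin s | Function.Surjective g}

theorem surjCount_eq_alternating_sum {R : Type*} [CommRing R] (t s : ℕ) :
    (surjCount t s : R) = ∑ r ∈ range (s + 1), (s.choose r : R) * r ^ t * (-1) ^ (s - r) := by
  suffices h : (surjCount t s : ℤ) = ∑ r ∈ range (s + 1), (s.choose r : ℤ) * r ^ t * (-1) ^ (s - r)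
  · simpa using congrArg (Int.cast : ℤ → R) h
  have avoiding (T : Finset (Fin s)) :
      (T.inf fun j => ({g : Fin t → Fin s | j ∉ Set.range g} : Finset _))
        = Fintype.piFinset fun _ => Tᶜ := by
    ext g
    simp only [mem_inf, mem_filter, mem_univ, true_and, Set.mem_range, not_exists,
      Fintype.mem_piFinset, mem_compl]
    exact ⟨fun h k hk => h _ hk k rfl, fun h j hj k hk => h k (hk ▸ hj)⟩
  have surjective : (univ.inf fun j => ({g : Fin t → Fin s | j ∈ Set.range g} : Finset _))
      = ({g | Function.Surjective g} : Finset (Fin t → Fin s)) := by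
    ext g
    rw [mem_filter_univ]
    simp [mem_inf, Function.Surjective]
  have inclExcl := inclusion_exclusion_card_inf_compl (univ : Finset (Fin s))
    (fun j => ({g : Fin t → Fin s | j ∉ Set.range g} : Finset _))
  simp only [compl_filter, not_not, avoiding, Fintype.card_piFinset_const, card_compl,
    Fintype.card_fin] at inclExcl
  rw [surjCount, ← surjective, inclExcl,
    sum_powerset_apply_card (fun c => (-1 : ℤ) ^ c * ((s - c) ^ t : ℕ)), card_univ,
    Fintype.card_fin, ← sum_range_reflect]
  refine sum_congr rfl fun r hr => ?_
  have hr : r ≤ s := Nat.lt_succ_iff.1 (mem_range.1 hr)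
  rw [nsmul_eq_mul, Nat.add_sub_cancel, Nat.choose_symm hr, Nat.sub_sub_self hr]
  push_cast
  ring

theorem surjCount_zero_right {t : ℕ} (ht : t ≠ 0) : surjCount t 0 = 0 := by
  have : IsEmpty (Fin t → Fin 0) := by
    obtain ⟨t, rfl⟩ := Nat.exists_eq_add_one_of_ne_zero ht
    infer_instance
  simp [surjCount]

theorem surjCount_eq_zero_of_lt {t s : ℕ} (h : t < s) : surjCount t s = 0 := by
  refine card_eq_zero.2 (filter_eq_empty_iff.2 fun g _ hg => ?_)
  exact h.not_ge (by simpa using Fintype.card_le_of_surjective g hg)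

theorem card_filter_image_eq_surjCount {ι : Type*} (t : ℕ) {U B : Finset ι} (hBU : B ⊆ U) :
    #{f ∈ Fintype.piFinset fun _ : Fin t => U | image f univ = B} = surjCount t #B := by
  have mem_of_mem_fiber {f : Fin t → ι}
      (hf : f ∈ {f ∈ Fintype.piFinset fun _ : Fin t => U | image f univ = B}) (k : Fin t) :
      f k ∈ B :=
    (mem_filter.1 hf).2 ▸ mem_image_of_mem f (mem_univ k)
  refine card_bij' (fun f hf k => B.equivFin ⟨f k, mem_of_mem_fiber hf k⟩)
    (fun g _ k => (B.equivFin.symm (g k) : ι)) ?_ ?_ ?_ ?_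
  · intro f hf
    rw [mem_filter_univ]
    intro y
    have hy : (B.equivFin.symm y : ι) ∈ image f univ :=
      (mem_filter.1 hf).2 ▸ (B.equivFin.symm y).2
    obtain ⟨k, -, hk⟩ := mem_image.1 hy
    exact ⟨k, by simp [hk]⟩
  · intro g hg
    rw [mem_filter_univ] at hg
    refine mem_filter.2 ⟨Fintype.mem_piFinset.2 fun k => hBU (B.equivFin.symm (g k)).2, ?_⟩
    ext b
    refine ⟨fun hb => ?_, fun hb => ?_⟩
    · obtain ⟨k, -, rfl⟩ := mem_image.1 hb
      exact (B.equivFin.symm (g k)).2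
    · obtain ⟨k, hk⟩ := hg (B.equivFin ⟨b, hb⟩)
      exact mem_image.2 ⟨k, mem_univ k, by simp [hk]⟩
  · intro f _
    funext k
    simp
  · intro g _
    funext k
    simp

theorem sum_pow_eq_sum_powerset_surjCount {ι R : Type*} [CommSemiring R] (U : Finset ι)
    (y : ι → R) (hy : ∀ i ∈ U, IsIdempotentElem (y i)) (t : ℕ) :
    (∑ i ∈ U, y i) ^ t = ∑ B ∈ U.powerset, surjCount t #B • ∏ i ∈ B, y i := by
  have prod_eq {f : Fin t → ι} (hf : f ∈ Fintype.piFinset fun _ => U) :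
      ∏ k, y (f k) = ∏ i ∈ image f univ, y i := by
    rw [prod_comp]
    refine prod_congr rfl fun i hi => ?_
    obtain ⟨k, -, rfl⟩ := mem_image.1 hi
    exact (hy _ (Fintype.mem_piFinset.1 hf k)).pow_eq
      (card_ne_zero_of_mem (mem_filter.2 ⟨mem_univ k, rfl⟩))
  have image_mem {f : Fin t → ι} (hf : f ∈ Fintype.piFinset fun _ => U) :
      image f univ ∈ U.powerset :=
    mem_powerset.2 fun i hi => by
      obtain ⟨k, -, rfl⟩ := mem_image.1 hi
      exact Fintype.mem_piFinset.1 hf k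
  rw [sum_pow', sum_congr rfl fun f hf => prod_eq hf,
    ← sum_fiberwise_of_maps_to fun f hf => image_mem hf]
  refine sum_congr rfl fun B hB => ?_
  rw [sum_congr rfl fun f hf => by rw [(mem_filter.1 hf).2], sum_const,
    card_filter_image_eq_surjCount t (mem_powerset.1 hB)]

theorem integral_sum_indicator_one_pow {Ω ι : Type*} [MeasurableSpace Ω] (P : Measure Ω)
    [IsFiniteMeasure P] (U : Finset ι) {E : ι → Set Ω} (hE : ∀ i, MeasurableSet (E i)) (t : ℕ) :
    ∫ ω, (∑ i ∈ U, (E i).indicator 1 ω) ^ t ∂P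
      = ∑ B ∈ U.powerset, (surjCount t #B : ℝ) * P.real (⋂ i ∈ B, E i) := by
  have hpow (ω : Ω) : (∑ i ∈ U, (E i).indicator (1 : Ω → ℝ) ω) ^ t
      = ∑ B ∈ U.powerset, (surjCount t #B : ℝ) * (⋂ i ∈ B, E i).indicator 1 ω := by
    rw [sum_pow_eq_sum_powerset_surjCount _ _ fun i _ => ?_]
    · refine sum_congr rfl fun B _ => ?_
      rw [nsmul_eq_mul, prod_indicator_const_apply, one_pow]
    · by_cases h : ω ∈ E i <;> simp [IsIdempotentElem, h]
  have hmeas (B : Finset ι) : MeasurableSet (⋂ i ∈ B, E i) :=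
    Finset.measurableSet_biInter B fun i _ => hE i
  simp_rw [hpow]
  rw [integral_finsetSum _ fun B _ => ((integrable_const 1).indicator (hmeas B)).const_mul _]
  refine sum_congr rfl fun B _ => ?_
  rw [integral_const_mul, integral_indicator_one (hmeas B)]

section Cylinder
variable {α κ : Type*} [MeasurableSpace α] (μ : Measure α) [IsProbabilityMeasure μ]

theorem measure_setOf_forall_eq_of_card_le_one {s : Finset κ} (hs : #s ≤ 1) (c : κ → α) :
    μ {a | ∀ q ∈ s, a = c q} = ∏ q ∈ s, μ {c q} := by
  obtain rfl | ⟨q, hq⟩ := s.eq_empty_or_nonempty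
  · simp
  · rw [eq_singleton_iff_unique_mem.2 ⟨hq, fun b hb => card_le_one.1 hs b hb q hq⟩]
    simp

theorem measure_pi_setOf_forall_eq {n : ℕ} (K : Finset κ) (pos : κ → ℕ)
    (hpos : ∀ q ∈ K, pos q < n) (hinj : Set.InjOn pos K) (c : κ → α) :
    Measure.pi (fun _ : Fin n => μ) {x | ∀ q ∈ K, ∀ j : Fin n, (j : ℕ) = pos q → x j = c q}
      = ∏ q ∈ K, μ {c q} := by
  have hpi : {x : Fin n → α | ∀ q ∈ K, ∀ j : Fin n, (j : ℕ) = pos q → x j = c q}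
      = Set.univ.pi fun j : Fin n => {a | ∀ q ∈ {q ∈ K | pos q = j}, a = c q} := by
    ext x
    simp only [Set.mem_ofPred_eq, Set.mem_pi, Set.mem_univ, true_implies, mem_filter]
    exact ⟨fun h j q hq => h q hq.1 j hq.2.symm, fun h q hq j hj => h j q ⟨hq, hj.symm⟩⟩
  have hfiber (j : ℕ) : #{q ∈ K | pos q = j} ≤ 1 :=
    card_le_one.2 fun a ha b hb => hinj (mem_filter.1 ha).1 (mem_filter.1 hb).1
      ((mem_filter.1 ha).2.trans (mem_filter.1 hb).2.symm)
  rw [hpi, Measure.pi_pi]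
  simp_rw [measure_setOf_forall_eq_of_card_le_one μ (hfiber _)]
  rw [Fin.prod_univ_eq_prod_range (fun j => ∏ q ∈ K with pos q = j, μ {c q}),
    prod_fiberwise_of_maps_to fun q hq => mem_range.2 (hpos q hq)]

end Cylinder

def IsSpaced (m : ℕ) (B : Finset ℕ) : Prop := ∀ i ∈ B, ∀ j ∈ B, i < j → i + m ≤ j

section Occurrences
variable {α : Type*}

theorem occursAt_ofFn_iff {n : ℕ} (x : Fin n → α) (w : List α) (i : ℕ) :
    OccursAt (List.ofFn x) w i ↔
      i + w.length ≤ n ∧ ∀ (k : Fin w.length) (j : Fin n), (j : ℕ) = i + k → x j = w[k] := by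
  rw [OccursAt, List.length_ofFn]
  refine and_congr_right fun hi => ?_
  rw [List.ext_getElem_iff]
  simp only [List.length_take, List.length_drop, List.length_ofFn, List.getElem_take,
    List.getElem_drop, List.getElem_ofFn]
  constructor
  · rintro ⟨-, h⟩ k j hj
    obtain rfl : j = ⟨i + k, (Nat.add_lt_add_left k.2 i).trans_le hi⟩ := Fin.ext hj
    exact h k (by omega) k.2
  · intro h
    exact ⟨by omega, fun k hk hkw => h ⟨k, hkw⟩ _ rfl⟩

theorem Nonoverlapping.not_occursAt_of_lt {w : List α} (hw : Nonoverlapping w) {z : List α}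
    {i j : ℕ} (hij : i < j) (hji : j < i + w.length) (hi : OccursAt z w i) :
    ¬ OccursAt z w j := by
  rintro ⟨hj, hjw⟩
  obtain ⟨hi, hiw⟩ := hi
  refine hw ⟨(z.drop i).take (j - i + w.length), 0, j - i, ?_, by omega, ⟨?_, ?_⟩, ⟨?_, ?_⟩⟩
  all_goals simp only [List.length_take, List.length_drop, List.take_take, List.drop_take,
    List.drop_drop, Nat.sub_zero, Nat.add_zero]
  · omega
  · omega
  · rwa [show min w.length (j - i + w.length) = w.length by omega]
  · omega
  · rwa [show i + (j - i) = j by omega, show j - i + w.length - (j - i) = w.length by omega,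
      min_self]

theorem biInter_occursAt_eq_empty {w : List α} (hw : Nonoverlapping w) {n : ℕ} {B : Finset ℕ}
    (h : ¬ (IsSpaced w.length B ∧ ∀ i ∈ B, i + w.length ≤ n)) :
    ⋂ i ∈ B, {x : Fin n → α | OccursAt (List.ofFn x) w i} = ∅ := by
  refine Set.eq_empty_of_forall_notMem fun x hx => h ?_
  simp only [Set.mem_iInter, Set.mem_ofPred_eq] at hx
  refine ⟨fun i hi j hj hij => ?_, fun i hi => by simpa using (hx i hi).1⟩
  by_contra hji
  exact hw.not_occursAt_of_lt hij (by omega) (hx i hi) (hx j hj)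

variable [MeasurableSpace α]

theorem measurableSet_occursAt [MeasurableSingletonClass α] (n : ℕ) (w : List α) (i : ℕ) :
    MeasurableSet {x : Fin n → α | OccursAt (List.ofFn x) w i} := by
  simp_rw [occursAt_ofFn_iff]
  measurability

variable (μ : Measure α) [IsProbabilityMeasure μ]

theorem measureReal_pi_biInter_occursAt {n : ℕ} {w : List α} {B : Finset ℕ}
    (hB : IsSpaced w.length B) (hBn : ∀ i ∈ B, i + w.length ≤ n) :
    (Measure.pi fun _ : Fin n => μ).real (⋂ i ∈ B, {x | OccursAt (List.ofFn x) w i})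
      = wordProb μ w ^ #B := by
  have hcyl : ⋂ i ∈ B, {x : Fin n → α | OccursAt (List.ofFn x) w i}
      = {x | ∀ q ∈ B ×ˢ (univ : Finset (Fin w.length)),
          ∀ j : Fin n, (j : ℕ) = q.1 + q.2 → x j = w[q.2]} := by
    ext x
    simp only [Set.mem_iInter, Set.mem_ofPred_eq, occursAt_ofFn_iff, mem_product, mem_univ,
      and_true, Prod.forall]
    exact ⟨fun h i k hi => (h i hi).2 k, fun h i hi => ⟨hBn i hi, (h i · hi)⟩⟩
  have hpos : ∀ q ∈ B ×ˢ (univ : Finset (Fin w.length)), q.1 + q.2 < n := by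
    rintro ⟨i, k⟩ hq
    have := hBn i (mem_product.1 hq).1
    have := k.2
    simp only
    omega
  have hinj : Set.InjOn (fun q : ℕ × Fin w.length => q.1 + q.2)
      (B ×ˢ (univ : Finset (Fin w.length)) : Finset _) := by
    rintro ⟨i, k⟩ hq ⟨i', k'⟩ hq' heq
    simp only [mem_coe, mem_product, mem_univ, and_true] at hq hq' heq
    have := k.2
    have := k'.2
    rcases lt_trichotomy i i' with h | rfl | h
    · have := hB i hq i' hq' h; omega
    · simp only [Prod.mk.injEq, true_and]; omega
    · have := hB i' hq' i hq h; omega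
  rw [measureReal_def, hcyl, measure_pi_setOf_forall_eq μ _ _ hpos hinj, prod_product]
  dsimp only
  rw [Finset.prod_const (∏ k : Fin w.length, μ {w[k]}), ENNReal.toReal_pow, ENNReal.toReal_prod,
    wordProb, ← Fin.prod_univ_fun_getElem]
  rfl

theorem measureReal_pi_biInter_occursAt_eq_ite {w : List α} (hw : Nonoverlapping w) (n : ℕ)
    (B : Finset ℕ) :
    (Measure.pi fun _ : Fin n => μ).real (⋂ i ∈ B, {x | OccursAt (List.ofFn x) w i})
      = if IsSpaced w.length B ∧ B ⊆ range (n + 1 - w.length) then wordProb μ w ^ #B else 0 := by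
  have hrange : B ⊆ range (n + 1 - w.length) ↔ ∀ i ∈ B, i + w.length ≤ n := by
    simp only [subset_iff, mem_range]
    exact forall₂_congr fun i _ => by omega
  split_ifs with h
  · exact measureReal_pi_biInter_occursAt μ h.1 (hrange.1 h.2)
  · rw [biInter_occursAt_eq_empty hw (by rwa [← hrange]), measureReal_empty]

end Occurrences

theorem isSpaced_insert_iff {k N : ℕ} {C : Finset ℕ} (hC : C ⊆ range N) :
    IsSpaced (k + 1) (insert N C) ↔ IsSpaced (k + 1) C ∧ C ⊆ range (N - k) := by
  have hlt : ∀ i ∈ C, i < N := fun i hi => mem_range.1 (hC hi)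
  constructor
  · intro h
    refine ⟨fun i hi j hj hij => h i (mem_insert_of_mem hi) j (mem_insert_of_mem hj) hij,
      fun i hi => ?_⟩
    have := h i (mem_insert_of_mem hi) N (mem_insert_self N C) (hlt i hi)
    exact mem_range.2 (by omega)
  · rintro ⟨h, hCk⟩ i hi j hj hij
    have hk : ∀ i ∈ C, i + k < N := fun i hi => by have := mem_range.1 (hCk hi); omega
    rcases mem_insert.1 hi with hi | hi <;> rcases mem_insert.1 hj with hj | hj
    · omega
    · have := hlt j hj; omega
    · have := hk i hi; omega
    · exact h i hi j hj hij

theorem card_isSpaced_powersetCard_range_succ_succ (k N s : ℕ) :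
    #{B ∈ (range (N + 1)).powersetCard (s + 1) | IsSpaced (k + 1) B}
      = #{B ∈ (range N).powersetCard (s + 1) | IsSpaced (k + 1) B}
        + #{B ∈ (range (N - k)).powersetCard s | IsSpaced (k + 1) B} := by
  -- split on whether `N ∈ B`; if so, the other elements of `B` lie in `range (N - k)`
  have hN : N ∉ range N := by simp
  rw [range_add_one, powersetCard_succ_insert hN, filter_union, card_union_of_disjoint]
  · congr 1
    rw [filter_image, card_image_of_injOn]
    · congr 1
      ext C
      simp only [mem_filter, mem_powersetCard]
      constructor
      · rintro ⟨⟨hC, hCs⟩, hsp⟩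
        obtain ⟨hsp, hCk⟩ := (isSpaced_insert_iff hC).1 hsp
        exact ⟨⟨hCk, hCs⟩, hsp⟩
      · rintro ⟨⟨hC, hCs⟩, hsp⟩
        have hCN : C ⊆ range N := hC.trans (range_subset_range.2 (Nat.sub_le N k))
        exact ⟨⟨hCN, hCs⟩, (isSpaced_insert_iff hCN).2 ⟨hsp, hC⟩⟩
    · intro C hC D hD hCD
      have hC : N ∉ C := fun h => hN ((mem_powersetCard.1 (mem_filter.1 hC).1).1 h)
      have hD : N ∉ D := fun h => hN ((mem_powersetCard.1 (mem_filter.1 hD).1).1 h)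
      rw [← erase_insert hC, ← erase_insert hD]
      exact congrArg (·.erase N) hCD
  · refine disjoint_left.2 fun B hB hB' => ?_
    obtain ⟨C, -, rfl⟩ := mem_image.1 (mem_filter.1 hB').1
    exact hN ((mem_powersetCard.1 (mem_filter.1 hB).1).1 (mem_insert_self N C))

theorem card_isSpaced_powersetCard_range (k N s : ℕ) :
    #{B ∈ (range N).powersetCard s | IsSpaced (k + 1) B} = (N + k - s * k).choose s := by
  induction N using Nat.strong_induction_on generalizing s with
  | _ N ih =>
  match N, s with
  | N, 0 =>
    simp [IsSpaced, filter_singleton]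
  | 0, s + 1 =>
    rw [range_zero, powersetCard_eq_empty.2 (by simp), filter_empty, card_empty,
      Nat.choose_eq_zero_of_lt (by rw [add_one_mul]; omega)]
  | N + 1, s + 1 =>
    rw [card_isSpaced_powersetCard_range_succ_succ, ih N (by omega), ih (N - k) (by omega),
      add_one_mul]
    rcases Nat.eq_zero_or_pos s with rfl | hs
    · simp only [zero_mul, zero_add, Nat.sub_zero, Nat.choose_zero_right, Nat.choose_one_right]
      omega
    have hks : k ≤ s * k := Nat.le_mul_of_pos_left k hs
    generalize s * k = a at hks ⊢
    rcases lt_or_ge N a with hNa | hNa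
    · rw [Nat.choose_eq_zero_of_lt (by omega), Nat.choose_eq_zero_of_lt (by omega),
        Nat.choose_eq_zero_of_lt (by omega)]
    · rw [show N + 1 + k - (a + k) = N - a + 1 by omega, show N + k - (a + k) = N - a by omega,
        show N - k + k - a = N - a by omega, Nat.choose_succ_succ', add_comm]

theorem sum_filter_powerset_apply_card {ι M : Type*} [AddCommMonoid M] (U : Finset ι)
    (p : Finset ι → Prop) [DecidablePred p] (f : ℕ → M) :
    ∑ B ∈ U.powerset with p B, f #B
      = ∑ s ∈ range (#U + 1), #{B ∈ U.powersetCard s | p B} • f s := by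
  rw [← sum_fiberwise_of_maps_to (g := card) (t := range (#U + 1)) fun B hB =>
    mem_range.2 (Nat.lt_succ_of_le (card_le_card (mem_powerset.1 (mem_filter.1 hB).1)))]
  refine sum_congr rfl fun s _ => ?_
  rw [sum_congr rfl fun B hB => by rw [(mem_filter.1 hB).2], sum_const, filter_filter,
    powersetCard_eq_filter, filter_filter]
  simp only [and_comm]

theorem sum_range_card_isSpaced_smul_eq_sum_Icc (k n t : ℕ) (ht : t ≠ 0) (p : ℝ) :
    ∑ s ∈ range (n - k + 1),
        #{B ∈ (range (n - k)).powersetCard s | IsSpaced (k + 1) B} • ((surjCount t s : ℝ) * p ^ s)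
      = ∑ s ∈ Icc 1 (min (n / (k + 1)) t),
          (∑ r ∈ range (s + 1), (s.choose r : ℝ) * (r : ℝ) ^ t * (-1 : ℝ) ^ (s - r))
            * ((n - s * (k + 1) + s).choose s : ℝ) * p ^ s := by
  simp_rw [card_isSpaced_powersetCard_range, nsmul_eq_mul]
  have hsub : Icc 1 (min (n / (k + 1)) t) ⊆ range (n - k + 1) := by
    intro s hs
    obtain ⟨hs1, hsn, -⟩ := by simpa [Nat.le_div_iff_mul_le] using hs
    have : k ≤ s * k := Nat.le_mul_of_pos_left k hs1
    rw [mul_add_one] at hsn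
    exact mem_range.2 (by omega)
  rw [← sum_subset hsub fun s _ hs => ?vanish]
  · refine sum_congr rfl fun s hs => ?_
    obtain ⟨hs1, hsn, -⟩ := by simpa [Nat.le_div_iff_mul_le] using hs
    have : k ≤ s * k := Nat.le_mul_of_pos_left k hs1
    rw [mul_add_one] at hsn ⊢
    rw [show n - k + k - s * k = n - (s * k + s) + s by omega,
      surjCount_eq_alternating_sum]
    ring
  · simp only [mem_Icc, not_and_or, not_le, min_lt_iff,
      Nat.div_lt_iff_lt_mul (Nat.add_one_pos k)] at hs
    rcases hs with hs | hsn | hts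
    · rw [Nat.lt_one_iff.1 hs, surjCount_zero_right ht]
      simp
    · have hs : 0 < s := Nat.pos_of_ne_zero fun h => by simp [h] at hsn
      have : k ≤ s * k := Nat.le_mul_of_pos_left k hs
      rw [mul_add_one] at hsn
      rw [Nat.choose_eq_zero_of_lt (by omega)]
      simp
    · rw [surjCount_eq_zero_of_lt hts]
      simp

theorem stmt7_general {α : Type*} [MeasurableSpace α] [MeasurableSingletonClass α]
    (μ : Measure α) [IsProbabilityMeasure μ] (n m : ℕ) (w : List α)
    (hw : Nonoverlapping w) (hm : w.length = m) (hm1 : 1 ≤ m)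
    (p : ℝ) (hp : p = wordProb μ w) (t : ℕ) (ht : 1 ≤ t) :
    (∫ x, ((countOcc w (List.ofFn x) : ℝ)) ^ t ∂(Measure.pi fun _ : Fin n => μ))
      = ∑ s ∈ Finset.Icc 1 (min (n / m) t),
          (∑ r ∈ Finset.range (s + 1),
              (s.choose r : ℝ) * (r : ℝ) ^ t * (-1 : ℝ) ^ (s - r))
            * ((n - s * m + s).choose s : ℝ) * p ^ s := by
  obtain ⟨k, rfl⟩ : ∃ k, m = k + 1 := ⟨m - 1, by omega⟩
  subst hp
  set E : ℕ → Set (Fin n → α) := fun i => {x | OccursAt (List.ofFn x) w i}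
  have hcount (x : Fin n → α) :
      (countOcc w (List.ofFn x) : ℝ) = ∑ i ∈ range n, (E i).indicator 1 x := by
    rw [countOcc, List.length_ofFn, card_filter]
    push_cast
    rfl
  have hgood : {B ∈ (range n).powerset | IsSpaced (k + 1) B ∧ B ⊆ range (n - k)}
      = {B ∈ (range (n - k)).powerset | IsSpaced (k + 1) B} := by
    ext B
    simp only [mem_filter, mem_powerset]
    exact ⟨fun h => ⟨h.2.2, h.2.1⟩,
      fun h => ⟨h.1.trans (range_subset_range.2 (Nat.sub_le n k)), h.2, h.1⟩⟩
  simp_rw [hcount]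
  rw [integral_sum_indicator_one_pow _ _ (measurableSet_occursAt n w)]
  simp_rw [measureReal_pi_biInter_occursAt_eq_ite μ hw, hm, Nat.add_sub_add_right, mul_ite,
    mul_zero]
  rw [← sum_filter, hgood,
    sum_filter_powerset_apply_card _ _ fun s => (surjCount t s : ℝ) * wordProb μ w ^ s,
    card_range]
  exact sum_range_card_isSpaced_smul_eq_sum_Icc k n t (by omega) _

/-- Higher moments of the occurrence count of a nonoverlapping word `w` of length
`m` in an i.i.d. string of length `n` with per-position probability `p`:
`E(N_w^t) = ∑_{s=1}^{min(T,t)} A_{t,s} C(n - s m + s, s) p^s` where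
`A_{t,s} = ∑_{r=0}^s C(s,r) r^t (-1)^(s-r)` and `T = max {t' : n - t' m ≥ 0} = ⌊n/m⌋`. -/
theorem stmt7 {α : Type*} [Fintype α] [MeasurableSpace α] [MeasurableSingletonClass α]
    (μ : Measure α) [IsProbabilityMeasure μ] (n m : ℕ) (w : List α)
    (hw : Nonoverlapping w) (hm : w.length = m) (hm1 : 1 ≤ m)
    (p : ℝ) (hp : p = wordProb μ w) (t : ℕ) (ht : 1 ≤ t) :
    (∫ x, ((countOcc w (List.ofFn x) : ℝ)) ^ t ∂(Measure.pi fun _ : Fin n => μ))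
      = ∑ s ∈ Finset.Icc 1 (min (n / m) t),
          (∑ r ∈ Finset.range (s + 1),
              (s.choose r : ℝ) * (r : ℝ) ^ t * (-1 : ℝ) ^ (s - r))
            * ((n - s * m + s).choose s : ℝ) * p ^ s :=
  stmt7_general μ n m w hw hm hm1 p hp t ht
end

section
/- Under the fair-coin measure there exists a sequence of nonoverlapping binary partial words w_1, w_2, ... with strictly increasing lengths tending to infinity such that (-log_2 P(w_n)) / |w_n| tends to 0 as n tends to infinity. -/
/-!
In `w(m)` only the `m` leading zeros and the `m` ones at the positive multiples of `m`
are specified, so `-log₂ P(w(m)) / |w(m)| ≤ (2m + 1) / (m² + 1) → 0`. It is nonoverlapping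
because every shift `0 < d ≤ m²` of `w(m)` against itself puts a specified `1` on top of a
leading `0`: with `p = (-d) mod m < m`, the position `d + p` is a multiple of `m` in `[m, m²]`.
-/

open scoped Classical

/-- A pair of words `(x, y)` is nonoverlapping if no string `z` with
`|z| < |x| + |y|` contains an occurrence of `x` and a (different, if `x = y`)
occurrence of `y`. -/
def PairNonoverlapping {α : Type*} (x y : List α) : Prop :=
  ¬ ∃ (z : List α) (i j : ℕ), z.length < x.length + y.length ∧
    OccursAt z x i ∧ OccursAt z y j ∧ (x ≠ y ∨ i ≠ j)

/-- A set of words is nonoverlapping if every pair of its elements (including a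
word with itself) is nonoverlapping. -/
def SetNonoverlapping {α : Type*} (S : Set (List α)) : Prop :=
  ∀ x ∈ S, ∀ y ∈ S, PairNonoverlapping x y

/-- `w'` is a realization of the partial word `w` (letters `some a`, wildcard
`none` = `?`): same length and agreement at all non-wildcard positions. -/
def Realizes {α : Type*} (w : List (Option α)) (w' : List α) : Prop :=
  List.Forall₂ (fun o a => ∀ b, o = some b → a = b) w w'

/-- A partial word is nonoverlapping if the set of its realizations is a
nonoverlapping set of words. -/
def PartialNonoverlapping {α : Type*} (w : List (Option α)) : Prop :=
  SetNonoverlapping {w' | Realizes w w'}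

open Filter Topology

section PartialWords

variable {α : Type*}

theorem Realizes.getElem?_eq_some {w : List (Option α)} {x : List α} (h : Realizes w x)
    {p : ℕ} {a : α} (hp : w[p]? = some (some a)) : x[p]? = some a := by
  induction h generalizing p with
  | nil => simp at hp
  | cons hab _ ih =>
    cases p with
    | zero => simpa using hab a (by simpa using hp)
    | succ p => exact ih hp

theorem OccursAt.getElem?_eq_some {z x : List α} {i p : ℕ} {a : α} (h : OccursAt z x i)
    (hp : x[p]? = some a) : z[i + p]? = some a := by
  rw [← h.2, List.getElem?_take] at hp
  split_ifs at hp
  rwa [List.getElem?_drop] at hp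

theorem OccursAt.eq_of_length_eq {z x y : List α} {i : ℕ} (hx : OccursAt z x i)
    (hy : OccursAt z y i) (hl : x.length = y.length) : x = y := by
  rw [← hx.2, ← hy.2, hl]

def HasShiftConflicts (w : List (Option α)) : Prop :=
  ∀ d, 0 < d → d < w.length →
    ∃ p a b, a ≠ b ∧ w[p]? = some (some a) ∧ w[d + p]? = some (some b)

theorem HasShiftConflicts.not_occursAt_of_lt {w : List (Option α)} (hw : HasShiftConflicts w)
    {x y z : List α} {i j : ℕ} (hx : Realizes w x) (hy : Realizes w y)
    (hxi : OccursAt z x i) (hyj : OccursAt z y j) (hij : i < j)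
    (hz : z.length < x.length + y.length) : False := by
  have hxl := hx.length_eq
  obtain ⟨p, a, b, hab, ha, hb⟩ := hw (j - i) (by omega) (by have := hyj.1; omega)
  have hza : z[j + p]? = some a := hyj.getElem?_eq_some (hy.getElem?_eq_some ha)
  have hzb : z[j + p]? = some b := by
    have := hxi.getElem?_eq_some (hx.getElem?_eq_some hb)
    rwa [show i + (j - i + p) = j + p by omega] at this
  exact hab (Option.some_injective _ (hza.symm.trans hzb))

theorem HasShiftConflicts.partialNonoverlapping {w : List (Option α)}
    (hw : HasShiftConflicts w) : PartialNonoverlapping w := by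
  rintro x (hx : Realizes w x) y (hy : Realizes w y) ⟨z, i, j, hz, hxi, hyj, hne⟩
  rcases lt_trichotomy i j with hij | rfl | hji
  · exact hw.not_occursAt_of_lt hx hy hxi hyj hij hz
  · have hxy : x = y := hxi.eq_of_length_eq hyj (hx.length_eq.symm.trans hy.length_eq)
    exact hne.elim (· hxy) (· rfl)
  · exact hw.not_occursAt_of_lt hy hx hyj hxi hji (by omega)

end PartialWords

/-- The word `0^m (1 ?^{m-1})^{m-1} 1` read position by position. -/
def sparseWord (m : ℕ) : List (Option Bool) :=
  (List.range (m * m + 1)).map fun i =>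
    if i < m then some false else if m ∣ i then some true else none

theorem sparseWord_length (m : ℕ) : (sparseWord m).length = m * m + 1 := by
  simp [sparseWord]

theorem sparseWord_getElem?_of_lt {m i : ℕ} (hi : i < m) :
    (sparseWord m)[i]? = some (some false) := by
  have : i < m * m + 1 := by nlinarith
  simp [sparseWord, List.getElem?_range this, hi]

theorem sparseWord_getElem?_of_dvd {m i : ℕ} (hmi : m ≤ i) (him : i ≤ m * m)
    (hdvd : m ∣ i) :
    (sparseWord m)[i]? = some (some true) := by
  simp [sparseWord, List.getElem?_range (Nat.lt_succ_of_le him), Nat.not_lt.2 hmi, hdvd]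

theorem exists_lt_dvd_add_of_le_mul_self {m d : ℕ} (hd : 0 < d) (hdm : d ≤ m * m) :
    ∃ p < m, m ≤ d + p ∧ d + p ≤ m * m ∧ m ∣ d + p := by
  have hm : 0 < m := Nat.pos_of_ne_zero (by rintro rfl; omega)
  have hdiv := Nat.div_add_mod d m
  rcases Nat.eq_zero_or_pos (d % m) with hr | hr
  · exact ⟨0, hm, Nat.le_of_dvd hd (Nat.dvd_of_mod_eq_zero hr), hdm,
      Nat.dvd_of_mod_eq_zero hr⟩
  · have hlt : d < m * m := lt_of_le_of_ne hdm fun h => by simp [h] at hr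
    have hq : d / m + 1 ≤ m := (Nat.div_lt_iff_lt_mul hm).2 hlt
    have hsum : d + (m - d % m) = m * (d / m + 1) := by
      have := Nat.mod_lt d hm
      rw [Nat.mul_succ]; omega
    refine ⟨m - d % m, by omega, ?_, ?_, ?_⟩ <;> rw [hsum]
    · exact Nat.le_mul_of_pos_right m (Nat.succ_pos _)
    · exact Nat.mul_le_mul_left m hq
    · exact Dvd.intro _ rfl

theorem sparseWord_hasShiftConflicts (m : ℕ) : HasShiftConflicts (sparseWord m) := by
  intro d hd hdl
  rw [sparseWord_length] at hdl
  obtain ⟨p, hpm, hmp, hpmm, hdvd⟩ := exists_lt_dvd_add_of_le_mul_self (m := m) hd (by omega)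
  exact ⟨p, false, true, Bool.false_ne_true, sparseWord_getElem?_of_lt hpm,
    sparseWord_getElem?_of_dvd hmp hpmm hdvd⟩

theorem count_lt_or_dvd_le (m n : ℕ) :
    Nat.count (fun i => i < m ∨ m ∣ i) (m * n + 1) ≤ m + (n + 1) := by
  rw [Nat.count_eq_card_filter_range]
  have hsub : {i ∈ Finset.range (m * n + 1) | i < m ∨ m ∣ i} ⊆
      Finset.range m ∪ (Finset.range (n + 1)).image (m * ·) := by
    intro i hi
    simp only [Finset.mem_filter, Finset.mem_range] at hi
    obtain ⟨hi, hlt | ⟨k, rfl⟩⟩ := hi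
    · exact Finset.mem_union_left _ (Finset.mem_range.2 hlt)
    · refine Finset.mem_union_right _ (Finset.mem_image.2 ?_)
      rcases Nat.eq_zero_or_pos m with rfl | hm
      · exact ⟨0, by simp⟩
      · have hkn : k ≤ n := Nat.le_of_mul_le_mul_left (by omega) hm
        exact ⟨k, Finset.mem_range.2 (Nat.lt_succ_of_le hkn), rfl⟩
  calc _ ≤ _ := Finset.card_le_card hsub
    _ ≤ _ := Finset.card_union_le _ _
    _ ≤ m + (n + 1) := by
      rw [Finset.card_range]
      exact Nat.add_le_add_left (Finset.card_image_le.trans (Finset.card_range _).le) m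

theorem sparseWord_countP_isSome (m : ℕ) :
    (sparseWord m).countP (fun o => o.isSome) =
      Nat.count (fun i => i < m ∨ m ∣ i) (m * m + 1) := by
  rw [sparseWord, List.countP_map, Nat.count]
  refine List.countP_congr fun i _ => ?_
  simp only [Function.comp_apply]
  split_ifs <;> simp_all

theorem neg_logb_two_half_pow (k : ℕ) : -Real.logb 2 ((1 / 2 : ℝ) ^ k) = k := by
  rw [one_div, inv_pow, Real.logb_inv, Real.logb_pow, Real.logb_self_eq_one one_lt_two]
  ring

theorem tendsto_div_mul_self_add_one {k : ℕ → ℕ} (hk : ∀ n, k n ≤ 2 * n + 1) :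
    Tendsto (fun n => (k n : ℝ) / ((n * n + 1 : ℕ) : ℝ)) atTop (𝓝 0) := by
  have hlim : Tendsto (fun n : ℕ => 4 * (1 / ((n : ℝ) + 1))) atTop (𝓝 0) := by
    simpa using tendsto_one_div_add_atTop_nhds_zero_nat.const_mul (4 : ℝ)
  refine squeeze_zero (fun n => by positivity) (fun n => ?_) hlim
  have hkn : (k n : ℝ) ≤ 2 * n + 1 := by exact_mod_cast hk n
  push_cast
  rw [mul_one_div, div_le_div_iff₀ (by positivity) (by positivity)]
  nlinarith [sq_nonneg ((n : ℝ) - 1), (Nat.cast_nonneg n : (0 : ℝ) ≤ n)]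

/-- There is a sequence of nonoverlapping binary partial words with strictly
increasing lengths tending to infinity such that `(-log₂ P(wₙ)) / |wₙ| → 0`,
where `P(w) = 2^(-k)` with `k` the number of non-wildcard symbols of `w`. -/
theorem stmt12 :
    ∃ w : ℕ → List (Option Bool),
      (∀ n, PartialNonoverlapping (w n))
      ∧ StrictMono (fun n => (w n).length)
      ∧ Filter.Tendsto (fun n => ((w n).length : ℝ)) Filter.atTop Filter.atTop
      ∧ Filter.Tendsto
          (fun n =>
            (-(Real.logb 2
                (((1 : ℝ) / 2) ^ ((w n).countP fun o => o.isSome))))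
              / ((w n).length : ℝ))
          Filter.atTop (nhds 0) := by
  have hmono : StrictMono fun m => (sparseWord m).length := fun a b hab => by
    simpa [sparseWord_length] using Nat.mul_self_lt_mul_self hab
  refine ⟨sparseWord, fun m => (sparseWord_hasShiftConflicts m).partialNonoverlapping, hmono,
    tendsto_natCast_atTop_atTop.comp hmono.tendsto_atTop, ?_⟩
  simp only [neg_logb_two_half_pow, sparseWord_length]
  exact tendsto_div_mul_self_add_one fun m =>
    (sparseWord_countP_isSome m).trans_le ((count_lt_or_dvd_le m m).trans_eq (by ring))
end
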